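/- arXiv:2112.02836 — 6 statements merged into one kernel-verified Lean document; each statement's English description precedes it below -/
import Mathlib

section
/- Let w ∈ ℂ^W with all coordinates nonzero, and let α ≥ 1 with α ≤ W. If y₀, y_α ∈ ℂ^W satisfy w[j+α]·y₀[j] = w[j]·y_α[j+α] for all j = 0,…,W−1−α, then there exists x : ℤ → ℂ (with x[n] indices taken in ℤ) such that y₀[n] = x[−n]·w[n] and y_α[n] = x[α−n]·w[n] for all n = 0,…,W−1. -/
/-- If the window has all nonzero coordinates and the pair
`(y₀, y_α)` satisfies the linear compatibility relations, then it arises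
from a common signal `x : ℤ → ℂ`. -/
theorem stmt_0 (W α : ℕ) (hα : 1 ≤ α) (hαW : α ≤ W)
    (w y0 ya : ℕ → ℂ) (hw : ∀ n, n < W → w n ≠ 0)
    (hrel : ∀ j, j + α < W → w (j + α) * y0 j = w j * ya (j + α)) :
    ∃ x : ℤ → ℂ, ∀ n, n < W →
      y0 n = x (-(n : ℤ)) * w n ∧ ya n = x ((α : ℤ) - (n : ℤ)) * w n := by
  refine ⟨fun m => if 0 < m then ya ((α : ℤ) - m).toNat / w (((α : ℤ) - m).toNat)
    else y0 (-m).toNat / w (-m).toNat, fun n hn => ?_⟩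
  constructor
  · have h1 : ¬ (0 : ℤ) < -(n : ℤ) := by omega
    simp only [h1, if_false, neg_neg, Int.toNat_natCast]
    field_simp [hw n hn]
  · by_cases hc : n < α
    · have h1 : (0 : ℤ) < (α : ℤ) - n := by omega
      have h2 : ((α : ℤ) - ((α : ℤ) - n)).toNat = n := by omega
      simp only [h1, if_true, h2]
      field_simp [hw n hn]
    · push_neg at hc
      have h1 : ¬ (0 : ℤ) < (α : ℤ) - n := by omega
      have h2 : (-((α : ℤ) - n)).toNat = n - α := by omega
      simp only [h1, if_false, h2]
      have hj := hrel (n - α) (by omega)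
      rw [Nat.sub_add_cancel hc] at hj
      have hwn := hw n hn
      have hwna := hw (n - α) (by omega)
      field_simp
      linear_combination -hj
end

section
/- Let W ≥ 2 and 1 ≤ α ≤ W−2. All complex roots of the polynomial p(z) = 1/4 + (1/4)·z^(W−1−α) + z^(W−1) lie strictly inside the unit circle. -/
/-! If `‖z‖ ≥ 1` then `‖z‖ ^ k ≥ 1` and `‖a * z ^ k + b‖ ≤ (‖a‖ + ‖b‖) ‖z‖ ^ k < ‖z‖ ^ k ≤ ‖z‖ ^ n`,
so `z ^ n = -(a * z ^ k + b)` is impossible. -/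

theorem norm_lt_one_of_pow_add_mul_pow_add_eq_zero {𝕜 : Type*} [NormedDivisionRing 𝕜]
    {a b z : 𝕜} {k n : ℕ} (hkn : k ≤ n) (hab : ‖a‖ + ‖b‖ < 1)
    (hz : z ^ n + a * z ^ k + b = 0) : ‖z‖ < 1 := by
  by_contra! hz1
  have hk : 1 ≤ ‖z‖ ^ k := one_le_pow₀ hz1
  have hzn : z ^ n = -(a * z ^ k + b) := by
    rw [eq_neg_iff_add_eq_zero, ← add_assoc, hz]
  have : ‖z‖ ^ n < ‖z‖ ^ k :=
    calc ‖z‖ ^ n = ‖a * z ^ k + b‖ := by rw [← norm_pow, hzn, norm_neg]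
      _ ≤ ‖a‖ * ‖z‖ ^ k + ‖b‖ := by
        grw [norm_add_le, norm_mul, norm_pow]
      _ ≤ (‖a‖ + ‖b‖) * ‖z‖ ^ k := by nlinarith [norm_nonneg b]
      _ < ‖z‖ ^ k := by nlinarith
  exact this.not_ge (pow_le_pow_right₀ hz1 hkn)

theorem stmt_3_general (W α : ℕ) :
    ∀ z : ℂ, (1/4 : ℂ) + (1/4 : ℂ) * z ^ (W - 1 - α) + z ^ (W - 1) = 0 →
      ‖z‖ < 1 := by
  intro z hz
  refine norm_lt_one_of_pow_add_mul_pow_add_eq_zero (a := 1/4) (b := 1/4)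
    (Nat.sub_le (W - 1) α) (by norm_num) ?_
  linear_combination hz

/-- all complex roots of `p(z) = 1/4 + (1/4)z^(W−1−α) + z^(W−1)`
lie strictly inside the unit circle. -/
theorem stmt_3 (W α : ℕ) (hW : 2 ≤ W) (hα1 : 1 ≤ α) (hα2 : α ≤ W - 2) :
    ∀ z : ℂ, (1/4 : ℂ) + (1/4 : ℂ) * z ^ (W - 1 - α) + z ^ (W - 1) = 0 →
      ‖z‖ < 1 :=
  stmt_3_general W α
end

section
/- Let y, y' ∈ ℂ^W with y[0]·y[W−1] ≠ 0, and suppose all roots of ŷ(ω) lie on the unit circle. If |ŷ'(ω)|² = |ŷ(ω)|² for all ω with |ω| = 1, then y' = e^{iθ} y for some real θ. -/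
/-!
For `|ω| = 1` and `deg p ≤ N` one has `|p(ω)|² = ω^{-N} p(ω) p†(ω)`, where
`p† = X^N · conj(p)(1/X)` is the conjugate reflection. Equal intensities on the (infinite) unit
circle therefore give the polynomial identity `q q† = p p†`. If all roots of `p` are unimodular
then `1/conj β = β` for each of them, so `p† = c p` and `q q† = c p²`. Comparing degrees gives
`deg q = deg p`, and every root of `q` is a root of `p`, so also `q† = e q`. Hence `q²` is a
constant multiple of `p²`, so `q = μ p`, and equal intensities force `|μ| = 1`.
-/

open Polynomial ComplexConjugate

lemma Complex.setOf_norm_eq_one_infinite : {z : ℂ | ‖z‖ = 1}.Infinite :=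
  Set.infinite_of_injOn_mapsTo
    (Subtype.val_injective.comp_injOn (Circle.exp_injOn_Icc (by linarith [Real.pi_gt_three])))
    (fun t _ => (Circle.exp t).norm_coe) (Set.Icc_infinite (zero_lt_one' ℝ))

namespace Polynomial

lemma reverse_X {R : Type*} [Semiring R] : (X : R[X]).reverse = 1 := by
  rw [← one_mul X, reverse_mul_X, ← C_1, reverse_C]

lemma eval_ofFn_eq_sum_range {R : Type*} [CommSemiring R] [DecidableEq R] (n : ℕ)
    (v : ℕ → R) (x : R) : eval x (ofFn n fun i => v i) = ∑ k ∈ Finset.range n, v k * x ^ k := by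
  simp [ofFn_eq_sum_monomial, eval_finsetSum, ← Fin.sum_univ_eq_sum_range (fun k => v k * x ^ k)]

/-- `X ^ N * conj(p)(1 / X)`: its roots are the reflections `1 / conj β` of the roots `β` of `p`. -/
noncomputable def conjReflect (N : ℕ) (p : ℂ[X]) : ℂ[X] := reflect N (p.map (starRingEnd ℂ))

variable {p q : ℂ[X]}

lemma conjReflect_natDegree (p : ℂ[X]) :
    conjReflect p.natDegree p = (p.map (starRingEnd ℂ)).reverse := by
  rw [conjReflect, reverse, natDegree_map]

lemma eval_conjReflect {N : ℕ} (hp : p.natDegree ≤ N) {ω : ℂ} (hω : ‖ω‖ = 1) :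
    eval ω (conjReflect N p) = ω ^ N * conj (eval ω p) := by
  have hωω : conj ω * ω = 1 := by
    rw [mul_comm, Complex.mul_conj, Complex.normSq_eq_norm_sq, hω]; norm_num
  let : Invertible (conj ω) := invertibleOfRightInverse _ _ hωω
  have h := eval₂_reflect_mul_pow (RingHom.id ℂ) (conj ω) N (p.map (starRingEnd ℂ))
    (by rwa [natDegree_map])
  rw [invOf_eq_right_inv hωω, eval₂_id, eval₂_id, eval_map_apply] at h
  rw [conjReflect, ← h, mul_left_comm, ← mul_pow, mul_comm ω, hωω, one_pow, mul_one]

lemma mul_conjReflect_eq_of_norm_eval_eq {N : ℕ} (hp : p.natDegree ≤ N) (hq : q.natDegree ≤ N)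
    (h : ∀ ω : ℂ, ‖ω‖ = 1 → ‖eval ω q‖ = ‖eval ω p‖) :
    q * conjReflect N q = p * conjReflect N p := by
  refine eq_of_infinite_eval_eq _ _ (Complex.setOf_norm_eq_one_infinite.mono fun ω hω => ?_)
  simp only [Set.mem_ofPred_eq] at hω ⊢
  simp only [eval_mul, eval_conjReflect hp hω, eval_conjReflect hq hω, mul_left_comm _ (ω ^ N),
    Complex.mul_conj, Complex.normSq_eq_norm_sq, h ω hω]

lemma reverse_map_conj_X_sub_C {b : ℂ} (hb : ‖b‖ = 1) :
    ((X - C b).map (starRingEnd ℂ)).reverse = C (-conj b) * (X - C b) := by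
  have hbb : conj b * b = 1 := by
    rw [mul_comm, Complex.mul_conj, Complex.normSq_eq_norm_sq, hb]; norm_num
  rw [Polynomial.map_sub, map_X, map_C, sub_eq_add_neg, ← C_neg, reverse_add_C, natDegree_X,
    reverse_X, pow_one, mul_sub, ← C_mul, neg_mul, hbb, map_neg C 1, C_1]
  ring

lemma exists_reverse_map_conj_eq_C_mul (hp : p ≠ 0) (h : ∀ z, p.IsRoot z → ‖z‖ = 1) :
    ∃ c ≠ 0, (p.map (starRingEnd ℂ)).reverse = C c * p := by
  let SelfReciprocal (f : ℂ[X]) : Prop := ∃ c ≠ 0, (f.map (starRingEnd ℂ)).reverse = C c * f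
  have hmul : ∀ f g, SelfReciprocal f → SelfReciprocal g → SelfReciprocal (f * g) := by
    rintro f g ⟨a, ha, hf⟩ ⟨b, hb, hg⟩
    refine ⟨a * b, mul_ne_zero ha hb, ?_⟩
    rw [Polynomial.map_mul, reverse_mul_of_domain, hf, hg, C_mul]
    ring
  have hone : SelfReciprocal 1 :=
    ⟨1, one_ne_zero, by rw [Polynomial.map_one, C_1, one_mul, ← C_1, reverse_C]⟩
  have hlc : p.leadingCoeff ≠ 0 := leadingCoeff_ne_zero.2 hp
  rw [(IsAlgClosed.splits p).eq_prod_roots]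
  refine hmul _ _ ⟨conj p.leadingCoeff / p.leadingCoeff, by simpa using hlc, ?_⟩
    (Multiset.prod_induction SelfReciprocal _ hmul hone ?_)
  · rw [map_C, reverse_C, ← C_mul, div_mul_cancel₀ _ hlc]
  · simp only [Multiset.forall_mem_map_iff]
    intro b hb
    have hb1 := h b (isRoot_of_mem_roots hb)
    refine ⟨-conj b, ?_, reverse_map_conj_X_sub_C hb1⟩
    have hb0 : b ≠ 0 := by rintro rfl; simp at hb1
    simpa using hb0

lemma natDegree_eq_of_mul_conjReflect_eq {N : ℕ} {c : ℂ} (hc : c ≠ 0) (hq : q ≠ 0)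
    (hpN : p.natDegree = N) (hqN : q.natDegree ≤ N) (h : q * conjReflect N q = C c * p ^ 2) :
    q.natDegree = N := by
  have hq' : conjReflect N q ≠ 0 := by
    rw [conjReflect, Ne, reflect_eq_zero_iff, Polynomial.map_eq_zero_iff (RingHom.injective _)]
    exact hq
  have hdeg := congrArg natDegree h
  rw [natDegree_mul hq hq', natDegree_C_mul hc, natDegree_pow, hpN] at hdeg
  have : (conjReflect N q).natDegree ≤ N :=
    natDegree_reflect_le.trans (by rw [natDegree_map]; omega)
  omega

lemma exists_eq_C_mul_of_C_mul_sq_eq {a b : ℂ} (ha : a ≠ 0) (h : C a * q ^ 2 = C b * p ^ 2) :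
    ∃ μ, q = C μ * p := by
  obtain ⟨μ, hμ⟩ := IsAlgClosed.exists_pow_nat_eq (b / a) two_pos
  have hsq : q ^ 2 = (C μ * p) ^ 2 := by
    refine mul_left_cancel₀ (C_ne_zero.2 ha) ?_
    rw [h, mul_pow, ← C_pow, hμ, ← mul_assoc, ← C_mul, mul_div_cancel₀ _ ha]
  rcases sq_eq_sq_iff_eq_or_eq_neg.1 hsq with hq | hq
  · exact ⟨μ, hq⟩
  · exact ⟨-μ, by rw [hq, C_neg, neg_mul]⟩

lemma norm_eq_one_of_norm_eval_C_mul_eq (hp : p ≠ 0) {μ : ℂ}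
    (h : ∀ ω : ℂ, ‖ω‖ = 1 → ‖eval ω (C μ * p)‖ = ‖eval ω p‖) : ‖μ‖ = 1 := by
  obtain ⟨ω, hω, hpω⟩ :=
    (Complex.setOf_norm_eq_one_infinite.sdiff (finite_setOfPred_isRoot hp)).nonempty
  have h' := h ω hω
  rw [eval_mul, eval_C, norm_mul] at h'
  exact (mul_eq_right₀ (norm_ne_zero_iff.2 hpω)).1 h'

theorem exists_eq_C_mul_of_norm_eval_eq (hp : p ≠ 0) (hq : q.natDegree ≤ p.natDegree)
    (hroots : ∀ z, p.IsRoot z → ‖z‖ = 1) (h : ∀ ω : ℂ, ‖ω‖ = 1 → ‖eval ω q‖ = ‖eval ω p‖) :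
    ∃ μ : ℂ, ‖μ‖ = 1 ∧ q = C μ * p := by
  obtain ⟨c, hc, hpc⟩ := exists_reverse_map_conj_eq_C_mul hp hroots
  have hkey : q * conjReflect p.natDegree q = C c * p ^ 2 := by
    rw [mul_conjReflect_eq_of_norm_eval_eq le_rfl hq h, conjReflect_natDegree, hpc]
    ring
  have hq0 : q ≠ 0 := by rintro rfl; simpa [hp, hc] using hkey.symm
  have hqN := natDegree_eq_of_mul_conjReflect_eq hc hq0 rfl hq hkey
  have hqroots : ∀ z, q.IsRoot z → ‖z‖ = 1 := fun z hz => hroots z (by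
    simpa [hz.eq_zero, hc] using congrArg (eval z) hkey)
  obtain ⟨e, he, hqe⟩ := exists_reverse_map_conj_eq_C_mul hq0 hqroots
  rw [← hqN, conjReflect_natDegree, hqe] at hkey
  obtain ⟨μ, rfl⟩ :=
    exists_eq_C_mul_of_C_mul_sq_eq (q := q) (p := p) (b := c) he (by linear_combination hkey)
  exact ⟨μ, norm_eq_one_of_norm_eval_C_mul_eq hp h, rfl⟩

end Polynomial

/-- if all roots of `ŷ` lie on the unit circle, then any `y'`
with the same Fourier intensity function equals `e^{iθ}y`. -/
theorem stmt_6 (W : ℕ) (hW : 1 ≤ W) (y y' : ℕ → ℂ)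
    (h0 : y 0 * y (W - 1) ≠ 0)
    (hroots : ∀ z : ℂ, (∑ n ∈ Finset.range W, y n * z ^ n) = 0 →
      ‖z‖ = 1)
    (hint : ∀ ω : ℂ, ‖ω‖ = 1 →
      (‖∑ n ∈ Finset.range W, y' n * ω ^ n‖) ^ 2
        = (‖∑ n ∈ Finset.range W, y n * ω ^ n‖) ^ 2) :
    ∃ θ : ℝ, ∀ n, n < W → y' n = Complex.exp (θ * Complex.I) * y n := by
  have hlead : (ofFn W fun i => y i).coeff (W - 1) ≠ 0 := by
    rw [ofFn_coeff_eq_val_of_lt _ (by omega)]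
    exact right_ne_zero_of_mul h0
  have hPN : (ofFn W fun i => y i).natDegree = W - 1 :=
    natDegree_eq_of_le_of_coeff_ne_zero (Nat.le_sub_one_of_lt (ofFn_natDegree_lt hW _)) hlead
  obtain ⟨μ, hμ, hQP⟩ := exists_eq_C_mul_of_norm_eval_eq
    (p := ofFn W fun i => y i) (q := ofFn W fun i => y' i)
    (fun h => hlead (by rw [h, coeff_zero]))
    (hPN ▸ Nat.le_sub_one_of_lt (ofFn_natDegree_lt hW _))
    (fun z hz => hroots z (by rwa [IsRoot, eval_ofFn_eq_sum_range] at hz))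
    (fun ω hω => by
      rw [eval_ofFn_eq_sum_range, eval_ofFn_eq_sum_range]
      exact (sq_eq_sq₀ (norm_nonneg _) (norm_nonneg _)).1 (hint ω hω))
  have hμ_exp : μ = Complex.exp (μ.arg * Complex.I) := by
    simpa [hμ] using (Complex.norm_mul_exp_arg_mul_I μ).symm
  refine ⟨μ.arg, fun n hn => ?_⟩
  have hcoeff := congrArg (coeff · n) hQP
  simp only [coeff_C_mul, ofFn_coeff_eq_val_of_lt _ hn] at hcoeff
  rw [hcoeff, ← hμ_exp]
end

section
/- Let N, L, W be positive integers with W ≤ N, α = gcd(L,N), R = N/α. Let λ ∈ (ℂ*)^α and define x'[n] = λ[n mod α]·x[n] and w'[n] = λ[(−n) mod α]^{−1}·w[n] for windows supported on {0,…,W−1}. Then for every section index j and every m, the vector y_{jα}(x',w') with entries x'[(jα − n) mod N]·w'[n], n = 0,…,W−1, equals y_{jα}(x,w) entrywise; in particular all phaseless periodic STFT measurements of (x',w') and (x,w) coincide. -/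
/-- the `(ℂ*)^α` modulation action leaves every windowed section
(and hence every phaseless periodic STFT measurement) unchanged. -/
theorem stmt_8 (N L W α : ℕ) (hN : 0 < N) (hL : 0 < L) (hW : 0 < W)
    (hWN : W ≤ N) (hα : α = Nat.gcd L N) (hdvd : α ∣ N)
    (x : ZMod N → ℂ) (w : ℕ → ℂ)
    (lam : ZMod α → ℂ) (hlam : ∀ i, lam i ≠ 0)
    (x' : ZMod N → ℂ) (w' : ℕ → ℂ)
    (hx' : ∀ z : ZMod N, x' z = lam (ZMod.castHom hdvd (ZMod α) z) * x z)
    (hw' : ∀ n : ℕ, w' n = (lam (-(n : ZMod α)))⁻¹ * w n) :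
    ∀ (j : ℕ) (n : ℕ), n < W →
      x' (((j * α : ℕ) : ZMod N) - (n : ZMod N)) * w' n
        = x (((j * α : ℕ) : ZMod N) - (n : ZMod N)) * w n := by
  intro j n _
  rw [hx', hw']
  have hcast : (ZMod.castHom hdvd (ZMod α)) (((j * α : ℕ) : ZMod N) - (n : ZMod N))
      = -(n : ZMod α) := by
    have h1 : (ZMod.castHom hdvd (ZMod α)) (((j * α : ℕ) : ZMod N))
        = ((j * α : ℕ) : ZMod α) := map_natCast _ _
    rw [map_sub, h1, map_natCast]
    simp [Nat.cast_mul, ZMod.natCast_self]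
  rw [hcast]
  field_simp [hlam]
end

section
/- Let N, L, W, α = gcd(L,N), R = N/α be as above, and let ω be an R-th root of unity. Define x'[n] = ω^{⌊n/α⌋}·x[n] for n = 0,…,N−1 and w'[n] = ω^{⌈n/α⌉}·w[n] for n = 0,…,W−1. Then for every j, the section y_{jα}(x',w') equals ω^{j}·y_{jα}(x,w); in particular the Fourier intensity functions of all sections, and hence all phaseless periodic STFT measurements, are preserved. -/
/-!
The entry of the section `y_{jα}` at `n` reads `x` at an index `m` with `m + n ≡ jα (mod Rα)`,
so `m + n = kα` for some `k ≡ j (mod R)`. Whenever `α ∣ m + n` one has `⌊m/α⌋ + ⌈n/α⌉ = (m + n)/α`,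
hence the two modulations together contribute `ω^k = ω^j`.
-/

theorem Nat.div_add_ceil_div_eq_of_add_eq_mul {m n k α : ℕ} (hα : 0 < α) (h : m + n = k * α) :
    m / α + (n + α - 1) / α = k := by
  have hm := Nat.div_mul_le_self m α
  have hm' := Nat.lt_mul_div_succ m hα
  have hn := Nat.div_mul_le_self (n + α - 1) α
  have hn' := Nat.lt_mul_div_succ (n + α - 1) hα
  rw [mul_comm α, Nat.succ_mul] at hm' hn'
  apply le_antisymm
  · refine Nat.lt_succ_iff.mp (Nat.lt_of_mul_lt_mul_right (a := α) ?_)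
    rw [Nat.succ_mul, add_mul]; omega
  · refine Nat.lt_succ_iff.mp (Nat.lt_of_mul_lt_mul_right (a := α) ?_)
    rw [Nat.succ_mul, add_mul]; omega

theorem exists_add_eq_mul_modEq {m n j R α : ℕ} (hα : 0 < α)
    (h : (m : ℤ) ≡ j * α - n [ZMOD (R * α : ℕ)]) : ∃ k, m + n = k * α ∧ k ≡ j [MOD R] := by
  have hsum : m + n ≡ j * α [MOD R * α] := by
    rw [← Int.natCast_modEq_iff]
    simpa using h.add_right (n : ℤ)
  obtain ⟨k, hk⟩ : α ∣ m + n := Nat.modEq_zero_iff_dvd.mp <|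
    (hsum.of_mul_left R).trans (Nat.modEq_zero_iff_dvd.mpr (dvd_mul_left α j))
  refine ⟨k, by rw [hk, mul_comm], Nat.ModEq.mul_right_cancel' hα.ne' ?_⟩
  rwa [mul_comm k, ← hk]

theorem Int.toNat_emod_lt (a : ℤ) {N : ℕ} (hN : 0 < N) : (a % N).toNat < N := by
  have := Int.emod_lt_of_pos a (Int.natCast_pos.mpr hN)
  omega

theorem Int.natCast_toNat_emod_modEq (a : ℤ) {N : ℕ} (hN : 0 < N) :
    ((a % N).toNat : ℤ) ≡ a [ZMOD N] := by
  rw [Int.toNat_of_nonneg (Int.emod_nonneg a (by omega))]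
  exact Int.mod_modEq a N

theorem pow_div_mul_pow_ceil_div_of_modEq {M : Type*} [Monoid M] {ω : M} {m n j R α : ℕ}
    (hω : ω ^ R = 1) (hα : 0 < α) (h : (m : ℤ) ≡ j * α - n [ZMOD (R * α : ℕ)]) :
    ω ^ (m / α) * ω ^ ((n + α - 1) / α) = ω ^ j := by
  obtain ⟨k, hk, hkj⟩ := exists_add_eq_mul_modEq hα h
  rw [← pow_add, Nat.div_add_ceil_div_eq_of_add_eq_mul hα hk]
  exact pow_eq_pow_of_modEq hkj hω

theorem stmt_9_general (N L W α R : ℕ) (hN : 0 < N)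
    (hα : α = Nat.gcd L N) (hR : R = N / α)
    (ω : ℂ) (hω : ω ^ R = 1) (x w x' w' : ℕ → ℂ)
    (hx' : ∀ n, n < N → x' n = ω ^ (n / α) * x n)
    (hw' : ∀ n, n < W → w' n = ω ^ ((n + α - 1) / α) * w n) :
    ∀ j, j < R → ∀ n, n < W →
      x' (((j * α - n : ℤ) % (N : ℤ)).toNat) * w' n
        = ω ^ j * (x (((j * α - n : ℤ) % (N : ℤ)).toNat) * w n) := by
  intro j _ n hn
  have hα₀ : 0 < α := hα ▸ Nat.gcd_pos_of_pos_right L hN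
  have hRα : R * α = N := hR ▸ Nat.div_mul_cancel (hα ▸ Nat.gcd_dvd_right L N)
  set m := ((j * α - n : ℤ) % (N : ℤ)).toNat
  have hm : (m : ℤ) ≡ j * α - n [ZMOD (R * α : ℕ)] := hRα ▸ Int.natCast_toNat_emod_modEq _ hN
  calc x' m * w' n = (ω ^ (m / α) * ω ^ ((n + α - 1) / α)) * (x m * w n) := by
        rw [hx' m (Int.toNat_emod_lt _ hN), hw' n hn]; ring
    _ = ω ^ j * (x m * w n) := by rw [pow_div_mul_pow_ceil_div_of_modEq hω hα₀ hm]

/-- the action of an `R`-th root of unity `ω`, modulating `x` by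
`ω^⌊n/α⌋` and `w` by `ω^⌈n/α⌉`, multiplies the section `y_{jα}` by `ω^j`. -/
theorem stmt_9 (N L W α R : ℕ) (hN : 0 < N) (hL : 0 < L)
    (hα : α = Nat.gcd L N) (hR : R = N / α) (hW : 0 < W) (hWN : W + α ≤ N)
    (ω : ℂ) (hω : ω ^ R = 1) (x w x' w' : ℕ → ℂ)
    (hx' : ∀ n, n < N → x' n = ω ^ (n / α) * x n)
    (hw' : ∀ n, n < W → w' n = ω ^ ((n + α - 1) / α) * w n) :
    ∀ j, j < R → ∀ n, n < W →
      x' (((j * α - n : ℤ) % (N : ℤ)).toNat) * w' n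
        = ω ^ j * (x (((j * α - n : ℤ) % (N : ℤ)).toNat) * w n) :=
  stmt_9_general N L W α R hN hα hR ω hω x w x' w' hx' hw'
end

section
/- Let y ∈ ℂ^W with y[W−1] ≠ 0, let β₁,…,β_{W−1} be the roots of ŷ(ω) (with multiplicity), and suppose all roots are nonzero, pairwise distinct, and none lie on the unit circle. Then the number of vectors y' ∈ ℂ^W with y'[W−1] ≠ 0 satisfying |ŷ'(ω)| = |ŷ(ω)| for all |ω| = 1, counted up to multiplication by a unimodular global phase, is exactly 2^{W−1}. -/
/-!
Write `P^*` for the conjugate reciprocal `z ^ d * conj (P (1 / conj z))` of a polynomial `P` of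
degree `d`. On the unit circle `P P^* = z ^ d |P|²`, so two polynomials of the same degree with
the same modulus on the circle have the same `P P^*`, an identity of polynomials. Hence every
root `β` of `ŷ` gives a root `β` or `1 / conj β` of `ŷ'`. For distinct, generic roots off the
circle these `W - 1` choices are pairwise distinct and exhaust the roots of `ŷ'`, so `ŷ'` is, up
to a scalar, `ŷ` with the roots indexed by some `I` flipped; comparing moduli at one point of the
circle shows the scalar is a phase. Conversely, flipping `β` scales the modulus on the circle by
`1 / |β|`, which the factor `∏_{i ∈ I} |β i|` compensates, and distinct `I` give distinct root
sets.
-/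

open Polynomial ComplexConjugate

lemma Complex.norm_mul_norm_sub_inv_conj {ω z : ℂ} (hω : ‖ω‖ = 1) (hz : z ≠ 0) :
    ‖z‖ * ‖ω - (conj z)⁻¹‖ = ‖ω - z‖ := by
  have hzc : conj z ≠ 0 := by simpa using hz
  have hωc : ω * conj ω = 1 := by
    rw [Complex.mul_conj, Complex.normSq_eq_norm_sq, hω]; norm_num
  calc ‖z‖ * ‖ω - (conj z)⁻¹‖ = ‖(conj z * ω - 1) * conj ω‖ := by
        rw [norm_mul, Complex.norm_conj, hω, mul_one, ← Complex.norm_conj z, ← norm_mul,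
          mul_sub, mul_inv_cancel₀ hzc]
    _ = ‖conj (z - ω)‖ := by
        congr 1
        rw [map_sub, sub_mul, mul_assoc, hωc]
        ring
    _ = ‖ω - z‖ := by rw [Complex.norm_conj, norm_sub_rev]

lemma Complex.ne_zero_of_ne_inv_conj {z : ℂ} (h : z ≠ (conj z)⁻¹) : z ≠ 0 := by
  rintro rfl
  simp at h

lemma Complex.ne_inv_conj_of_norm_ne_one {z : ℂ} (hz : z ≠ 0) (h : ‖z‖ ≠ 1) :
    z ≠ (conj z)⁻¹ := by
  intro hzz
  have hinv : ‖z‖ = ‖z‖⁻¹ := by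
    conv_lhs => rw [hzz]
    rw [norm_inv, Complex.norm_conj]
  have hpos := norm_pos_iff.mpr hz
  field_simp at hinv
  exact h ((pow_left_inj₀ hpos.le zero_le_one two_ne_zero).mp (by simpa using hinv))

namespace Polynomial

lemma exists_norm_eq_one_eval_ne_zero {P : ℂ[X]} (hP : P ≠ 0) :
    ∃ ω : ℂ, ‖ω‖ = 1 ∧ P.eval ω ≠ 0 := by
  by_contra! h
  exact hP (eq_zero_of_infinite_isRoot P (Complex.setOf_norm_eq_one_infinite.mono h))

lemma norm_eq_one_of_eq_C_mul {P Q : ℂ[X]} {u : ℂ} (hQ : Q ≠ 0) (hPQ : P = C u * Q)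
    (h : ∀ ω : ℂ, ‖ω‖ = 1 → ‖P.eval ω‖ = ‖Q.eval ω‖) : ‖u‖ = 1 := by
  obtain ⟨ω, hω, hQω⟩ := exists_norm_eq_one_eval_ne_zero hQ
  have := h ω hω
  rw [hPQ, eval_mul, eval_C, norm_mul] at this
  exact (mul_eq_right₀ (norm_ne_zero_iff.mpr hQω)).mp this

lemma eq_C_leadingCoeff_mul_prod_of_isRoot {K ι : Type*} [Field K] [Fintype ι] {P : K[X]}
    {f : ι → K} (hf : Function.Injective f) (hdeg : P.natDegree = Fintype.card ι)
    (hroot : ∀ i, P.IsRoot (f i)) : P = C P.leadingCoeff * ∏ i, (X - C (f i)) := by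
  refine eq_leadingCoeff_mul_of_monic_of_dvd_of_natDegree_le (monic_prod_X_sub_C f _) ?_ ?_
  · exact Finset.prod_dvd_of_coprime ((pairwise_coprime_X_sub_C hf).set_pairwise _)
      fun i _ => dvd_iff_isRoot.mpr (hroot i)
  · simp [hdeg]

noncomputable def conjReverse (P : ℂ[X]) : ℂ[X] := (P.map (starRingEnd ℂ)).reverse

lemma eval_conjReverse (P : ℂ[X]) {z : ℂ} (hz : z ≠ 0) :
    (conjReverse P).eval z = z ^ P.natDegree * conj (P.eval (conj z)⁻¹) := by
  let := invertibleOfNonzero (inv_ne_zero hz)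
  have h := eval₂_reverse_mul_pow (RingHom.id ℂ) z⁻¹ (P.map (starRingEnd ℂ))
  rw [invOf_eq_inv, inv_inv, natDegree_map_eq_of_injective (RingHom.injective _), eval₂_id,
    eval₂_id, eval_map, show z⁻¹ = conj (conj z)⁻¹ by simp, eval₂_hom] at h
  rw [conjReverse, ← h, map_inv₀, Complex.conj_conj, inv_pow, mul_comm,
    inv_mul_cancel_right₀ (pow_ne_zero _ hz)]

lemma eval_mul_conjReverse {P : ℂ[X]} {ω : ℂ} (hω : ‖ω‖ = 1) :
    (P * conjReverse P).eval ω = ω ^ P.natDegree * ((‖P.eval ω‖ ^ 2 : ℝ) : ℂ) := by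
  have hω0 : ω ≠ 0 := norm_ne_zero_iff.mp (by rw [hω]; exact one_ne_zero)
  have hinv : (conj ω)⁻¹ = ω := by
    rw [Complex.inv_def, Complex.conj_conj, Complex.normSq_conj, Complex.normSq_eq_norm_sq, hω]
    simp
  rw [eval_mul, eval_conjReverse P hω0, hinv, Complex.ofReal_pow, ← Complex.mul_conj']
  ring

lemma mul_conjReverse_eq_of_norm_eval_eq {P Q : ℂ[X]} (hdeg : P.natDegree = Q.natDegree)
    (h : ∀ ω : ℂ, ‖ω‖ = 1 → ‖P.eval ω‖ = ‖Q.eval ω‖) :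
    P * conjReverse P = Q * conjReverse Q := by
  refine eq_of_infinite_eval_eq _ _ (Complex.setOf_norm_eq_one_infinite.mono fun ω hω => ?_)
  simp only [Set.mem_ofPred_eq] at hω ⊢
  rw [eval_mul_conjReverse hω, eval_mul_conjReverse hω, hdeg, h ω hω]

lemma isRoot_or_isRoot_inv_conj_of_norm_eval_eq {P Q : ℂ[X]} (hdeg : P.natDegree = Q.natDegree)
    (h : ∀ ω : ℂ, ‖ω‖ = 1 → ‖P.eval ω‖ = ‖Q.eval ω‖) {z : ℂ} (hz : z ≠ 0) (hQ : Q.IsRoot z) :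
    P.IsRoot z ∨ P.IsRoot (conj z)⁻¹ := by
  have hPz : (P * conjReverse P).IsRoot z := by
    rw [mul_conjReverse_eq_of_norm_eval_eq hdeg h]
    simp [IsRoot.def, hQ.eq_zero]
  simpa [IsRoot, eval_conjReverse P hz, hz] using hPz

lemma eval_ofFn {R : Type*} [CommSemiring R] [DecidableEq R] {n : ℕ} (v : Fin n → R) (x : R) :
    (ofFn n v).eval x = ∑ i, v i * x ^ (i : ℕ) := by
  simp [ofFn_eq_sum_monomial, eval_finsetSum]

lemma natDegree_ofFn {R : Type*} [Semiring R] [DecidableEq R] {n : ℕ} (hn : 1 ≤ n)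
    {v : Fin n → R} (hv : v ⟨n - 1, by omega⟩ ≠ 0) : (ofFn n v).natDegree = n - 1 :=
  le_antisymm (Nat.le_pred_of_lt (ofFn_natDegree_lt hn v))
    (le_natDegree_of_ne_zero (by rwa [ofFn_coeff_eq_val_of_lt v (by omega)]))

lemma eq_const_mul_iff_ofFn_eq {R : Type*} [CommSemiring R] [DecidableEq R] {n : ℕ}
    (w v : Fin n → R) (a : R) : w = (fun i => a * v i) ↔ ofFn n w = C a * ofFn n v := by
  rw [← smul_eq_C_mul, ← map_smul, (injective_ofFn n).eq_iff]
  rfl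

end Polynomial

lemma mul_prod_norm_ne_zero {ι : Type*} {c : ℂ} {β : ι → ℂ} (hc : c ≠ 0)
    (hβ : ∀ i j, β i ≠ (conj (β j))⁻¹) (I : Finset ι) : c * ∏ i ∈ I, (‖β i‖ : ℂ) ≠ 0 :=
  mul_ne_zero hc <| Finset.prod_ne_zero_iff.mpr fun i _ =>
    Complex.ofReal_ne_zero.mpr (norm_ne_zero_iff.mpr (Complex.ne_zero_of_ne_inv_conj (hβ i i)))

section Flip

variable {ι : Type*} [DecidableEq ι] {β : ι → ℂ}

noncomputable def flipRoots (β : ι → ℂ) (I : Finset ι) (i : ι) : ℂ :=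
  if i ∈ I then (conj (β i))⁻¹ else β i

lemma flipRoots_injective (hinj : Function.Injective β) (hβ : ∀ i j, β i ≠ (conj (β j))⁻¹)
    (I : Finset ι) : Function.Injective (flipRoots β I) := by
  intro i j h
  unfold flipRoots at h
  split_ifs at h
  · exact hinj ((starRingEnd ℂ).injective (inv_injective h))
  · exact absurd h.symm (hβ j i)
  · exact absurd h (hβ i j)
  · exact hinj h

variable [Fintype ι]

noncomputable def flipPoly (c : ℂ) (β : ι → ℂ) (I : Finset ι) : ℂ[X] :=
  C (c * ∏ i ∈ I, (‖β i‖ : ℂ)) * ∏ i, (X - C (flipRoots β I i))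

lemma flipPoly_ne_zero {c : ℂ} (hc : c ≠ 0) (hβ : ∀ i j, β i ≠ (conj (β j))⁻¹)
    (I : Finset ι) : flipPoly c β I ≠ 0 :=
  mul_ne_zero (C_ne_zero.mpr (mul_prod_norm_ne_zero hc hβ I)) (monic_prod_X_sub_C _ _).ne_zero

lemma natDegree_flipPoly {c : ℂ} (hc : c ≠ 0) (hβ : ∀ i j, β i ≠ (conj (β j))⁻¹)
    (I : Finset ι) : (flipPoly c β I).natDegree = Fintype.card ι := by
  rw [flipPoly, natDegree_C_mul (mul_prod_norm_ne_zero hc hβ I),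
    natDegree_finsetProd_X_sub_C_eq_card, Finset.card_univ]

lemma isRoot_flipPoly_iff {c : ℂ} (hc : c ≠ 0) (hβ : ∀ i j, β i ≠ (conj (β j))⁻¹)
    {I : Finset ι} {z : ℂ} : (flipPoly c β I).IsRoot z ↔ ∃ i, flipRoots β I i = z := by
  rw [flipPoly, IsRoot.def, eval_mul, eval_C, mul_eq_zero,
    or_iff_right (mul_prod_norm_ne_zero hc hβ I), eval_prod, Finset.prod_eq_zero_iff]
  simp only [Finset.mem_univ, true_and, eval_sub, eval_X, eval_C, sub_eq_zero]
  exact exists_congr fun _ => eq_comm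

lemma isRoot_flipPoly_inv_conj_iff {c : ℂ} (hc : c ≠ 0) (hinj : Function.Injective β)
    (hβ : ∀ i j, β i ≠ (conj (β j))⁻¹) {I : Finset ι} {i : ι} :
    (flipPoly c β I).IsRoot (conj (β i))⁻¹ ↔ i ∈ I := by
  rw [isRoot_flipPoly_iff hc hβ]
  refine ⟨fun ⟨j, hj⟩ => ?_, fun hi => ⟨i, if_pos hi⟩⟩
  unfold flipRoots at hj
  split_ifs at hj with hjI
  · rwa [← hinj ((starRingEnd ℂ).injective (inv_injective hj))]
  · exact absurd hj (hβ j i)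

lemma eq_of_C_mul_flipPoly_eq {c u u' : ℂ} (hc : c ≠ 0) (hu : u ≠ 0) (hu' : u' ≠ 0)
    (hinj : Function.Injective β) (hβ : ∀ i j, β i ≠ (conj (β j))⁻¹) {I J : Finset ι}
    (h : C u * flipPoly c β I = C u' * flipPoly c β J) : I = J := by
  have hroots : ∀ z, (flipPoly c β I).IsRoot z ↔ (flipPoly c β J).IsRoot z := fun z => by
    have hz := congrArg (eval z) h
    rw [eval_mul, eval_mul, eval_C, eval_C] at hz
    rw [IsRoot.def, IsRoot.def, ← mul_eq_zero_iff_left hu, hz, mul_eq_zero_iff_left hu']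
  ext i
  rw [← isRoot_flipPoly_inv_conj_iff hc hinj hβ, hroots, isRoot_flipPoly_inv_conj_iff hc hinj hβ]

lemma norm_eval_flipPoly (c : ℂ) (hβ : ∀ i j, β i ≠ (conj (β j))⁻¹) (I : Finset ι) {ω : ℂ}
    (hω : ‖ω‖ = 1) : ‖(flipPoly c β I).eval ω‖ = ‖c‖ * ∏ i, ‖ω - β i‖ := by
  have hfactor : ∀ i, ‖ω - β i‖ = (if i ∈ I then ‖β i‖ else 1) * ‖ω - flipRoots β I i‖ := by
    intro i
    unfold flipRoots
    split_ifs
    · exact (Complex.norm_mul_norm_sub_inv_conj hω (Complex.ne_zero_of_ne_inv_conj (hβ i i))).symm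
    · exact (one_mul _).symm
  rw [Finset.prod_congr rfl fun i _ => hfactor i, Finset.prod_mul_distrib, Finset.prod_ite_mem,
    Finset.univ_inter]
  simp only [flipPoly, eval_mul, eval_C, eval_prod, eval_sub, eval_X, norm_mul, norm_prod,
    Complex.norm_real, norm_norm, mul_assoc]

lemma exists_eq_C_mul_flipPoly {c : ℂ} (hc : c ≠ 0) (hinj : Function.Injective β)
    (hβ : ∀ i j, β i ≠ (conj (β j))⁻¹) {P : ℂ[X]} (hdeg : P.natDegree = Fintype.card ι)
    (hP : ∀ ω : ℂ, ‖ω‖ = 1 → ‖P.eval ω‖ = ‖(flipPoly c β ∅).eval ω‖) :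
    ∃ I : Finset ι, ∃ θ : ℝ, P = C (Complex.exp (θ * Complex.I)) * flipPoly c β I := by
  have hroot : ∀ i, P.IsRoot (β i) ∨ P.IsRoot (conj (β i))⁻¹ := fun i =>
    isRoot_or_isRoot_inv_conj_of_norm_eval_eq (hdeg.trans (natDegree_flipPoly hc hβ ∅).symm) hP
      (Complex.ne_zero_of_ne_inv_conj (hβ i i))
      ((isRoot_flipPoly_iff hc hβ).mpr ⟨i, if_neg (Finset.notMem_empty i)⟩)
  let I := Finset.univ.filter fun i => ¬ P.IsRoot (β i)
  have hI : ∀ i, P.IsRoot (flipRoots β I i) := fun i => by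
    by_cases hi : i ∈ I
    · rw [flipRoots, if_pos hi]
      exact (hroot i).resolve_left (Finset.mem_filter.mp hi).2
    · rw [flipRoots, if_neg hi]
      simpa [I] using hi
  set u := P.leadingCoeff / (c * ∏ i ∈ I, (‖β i‖ : ℂ))
  have hPI : P = C u * flipPoly c β I := by
    rw [flipPoly, ← mul_assoc, ← C_mul, div_mul_cancel₀ _ (mul_prod_norm_ne_zero hc hβ I)]
    exact eq_C_leadingCoeff_mul_prod_of_isRoot (flipRoots_injective hinj hβ I) hdeg hI
  have hu : ‖u‖ = 1 := norm_eq_one_of_eq_C_mul (flipPoly_ne_zero hc hβ I) hPI fun ω hω => by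
    rw [hP ω hω, norm_eval_flipPoly c hβ ∅ hω, norm_eval_flipPoly c hβ I hω]
  have hexp : Complex.exp (u.arg * Complex.I) = u := by
    simpa [hu] using Complex.norm_mul_exp_arg_mul_I u
  exact ⟨I, u.arg, by rw [hexp, hPI]⟩

end Flip

/-- for a vector whose Fourier transform has nonzero, pairwise
distinct roots, none on the unit circle (and generic: no root is the
conjugate reflection of another), the set of vectors with the same Fourier
intensity function, counted up to a global phase, has exactly `2^(W−1)`
elements. -/
theorem stmt_15 (W : ℕ) (hW : 2 ≤ W) (y : Fin W → ℂ)
    (β : Fin (W - 1) → ℂ)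
    (hy : y ⟨W - 1, by omega⟩ ≠ 0)
    (hfac : ∀ ω : ℂ, ∑ n : Fin W, y n * ω ^ (n : ℕ)
      = y ⟨W - 1, by omega⟩ * ∏ i, (ω - β i))
    (hβ0 : ∀ i, β i ≠ 0)
    (hβinj : Function.Injective β)
    (hβcirc : ∀ i, ‖β i‖ ≠ 1)
    (hgen : ∀ i j, i ≠ j → β i ≠ 1 / (starRingEnd ℂ) (β j)) :
    ∃ S : Set (Fin W → ℂ), S.Finite ∧ S.ncard = 2 ^ (W - 1)
      ∧ (∀ v ∈ S, v ⟨W - 1, by omega⟩ ≠ 0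
          ∧ ∀ ω : ℂ, ‖ω‖ = 1 →
              ‖∑ n : Fin W, v n * ω ^ (n : ℕ)‖
                = ‖∑ n : Fin W, y n * ω ^ (n : ℕ)‖)
      ∧ ∀ y' : Fin W → ℂ, y' ⟨W - 1, by omega⟩ ≠ 0 →
          (∀ ω : ℂ, ‖ω‖ = 1 →
            ‖∑ n : Fin W, y' n * ω ^ (n : ℕ)‖
              = ‖∑ n : Fin W, y n * ω ^ (n : ℕ)‖) →
          ∃! v, v ∈ S ∧ ∃ θ : ℝ,
            y' = fun n => Complex.exp (θ * Complex.I) * v n := by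
  have hβ : ∀ i j, β i ≠ (conj (β j))⁻¹ := fun i j => by
    rcases eq_or_ne i j with rfl | hij
    · exact Complex.ne_inv_conj_of_norm_ne_one (hβ0 i) (hβcirc i)
    · simpa using hgen i j hij
  set c := y ⟨W - 1, by omega⟩
  have hy_eq : ofFn W y = flipPoly c β ∅ := Polynomial.funext fun ω => by
    simpa [eval_ofFn, flipPoly, flipRoots, eval_prod] using hfac ω
  have hdeg : ∀ I, (flipPoly c β I).natDegree = W - 1 := fun I => by
    rw [natDegree_flipPoly hy hβ, Fintype.card_fin]
  let v : Finset (Fin (W - 1)) → Fin W → ℂ := fun I => toFn W (flipPoly c β I)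
  have hv : ∀ I, ofFn W (v I) = flipPoly c β I := fun I =>
    ofFn_comp_toFn_eq_id_of_natDegree_lt (by rw [hdeg]; omega)
  refine ⟨Set.range v, Set.finite_range v, ?_, ?_, fun y' hy' hmod => ?_⟩
  · have hv_inj : Function.Injective v := fun I J h =>
      eq_of_C_mul_flipPoly_eq hy one_ne_zero one_ne_zero hβinj hβ (by rw [← hv, ← hv, h])
    rw [Set.ncard_range_of_injective hv_inj, Nat.card_eq_fintype_card, Fintype.card_finset,
      Fintype.card_fin]
  · rintro _ ⟨I, rfl⟩
    refine ⟨?_, fun ω hω => ?_⟩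
    · have hlead := leadingCoeff_ne_zero.mpr (flipPoly_ne_zero hy hβ I)
      rwa [leadingCoeff, hdeg] at hlead
    · rw [← eval_ofFn, ← eval_ofFn, hv, hy_eq, norm_eval_flipPoly c hβ I hω,
        norm_eval_flipPoly c hβ ∅ hω]
  obtain ⟨I, θ, hy'_eq⟩ := exists_eq_C_mul_flipPoly hy hβinj hβ
    (by rw [natDegree_ofFn (by omega) hy', Fintype.card_fin]) (P := ofFn W y')
    (by simpa only [← eval_ofFn, hy_eq] using hmod)
  refine ⟨v I, ⟨⟨I, rfl⟩, θ, by rw [eq_const_mul_iff_ofFn_eq, hv, hy'_eq]⟩, ?_⟩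
  rintro _ ⟨⟨J, rfl⟩, θ', hθ'⟩
  rw [eq_const_mul_iff_ofFn_eq, hv, hy'_eq] at hθ'
  exact congrArg v (eq_of_C_mul_flipPoly_eq hy (Complex.exp_ne_zero _) (Complex.exp_ne_zero _)
    hβinj hβ hθ').symm
end
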